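/- Let c ≥ 1 and let H_{j,l} (for c ≤ j ≤ 2c and 1 ≤ l ≤ 4) be complement-connected graphs such that H_{j,l} has order j and, for any two distinct index pairs (j,l) ≠ (j',l'), the graph H_{j,l} is not embeddable into H_{j',l'}. Let G be a connected uniform inclusion-free graph of rank i all of whose cocomponents are isomorphic to one of H_{c,1}, H_{c,2}, H_{c,3}, H_{c,4}. Let G' be obtained from G by replacing each cocomponent A ≅ H_{c,l} with a copy of H_{j,l}, where j ∈ [c, 2c] may depend on A. Then G' is a connected uniform inclusion-free graph of rank i. -/

import Mathlib

namespace PaperFO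

variable {V : Type}

/-- The adjacency relation at decomposition depth `i`: distinct vertices
`x, y` lying in a common member `F` of the depth-`i` decomposition `Dec^i G`
are adjacent in `F` iff `{x,y} ∈^{i+1} E(G)`, i.e. iff `G.Adj x y ↔ Even i`. -/
def parityAdj (G : SimpleGraph V) (i : ℕ) (x y : V) : Prop :=
  x ≠ y ∧ (G.Adj x y ↔ Even i)

/-- `cellRel G i x y` says that `x` and `y` lie in the same member of the
depth-`i` decomposition `Dec^i G` of `G` (for a connected graph `G`); these
vertex sets are the cells of the partition `P_i` of the paper. -/
def cellRel (G : SimpleGraph V) : ℕ → V → V → Prop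
  | 0 => Relation.ReflTransGen (fun a b => parityAdj G 0 a b)
  | i + 1 => Relation.ReflTransGen (fun a b => cellRel G i a b ∧ parityAdj G (i + 1) a b)

/-- The member of `Dec^i G` containing the vertex `v`, as a graph: the
depth-`i` environment `env_i(v; G)` of `v`. -/
def envGraph (G : SimpleGraph V) (i : ℕ) (v : V) :
    SimpleGraph {u : V // cellRel G i v u} where
  Adj x y := parityAdj G i x.1 y.1
  symm := ⟨fun x y h => ⟨h.1.symm, (G.adj_comm y.1 x.1).trans h.2⟩⟩
  loopless := ⟨fun x h => h.1 rfl⟩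

/-- The rank of a connected graph `G`: the smallest `k` such that the
partition `P_{k+1}` coincides with `P_k` (equivalently, such that `P_k`
consists of the vertex sets of the cocomponents of `G`). -/
noncomputable def rank (G : SimpleGraph V) : ℕ :=
  sInf {k : ℕ | ∀ x y : V, cellRel G (k + 1) x y ↔ cellRel G k x y}

/-- A connected graph `G` of rank `k` is uniform if `Dec^{k-1} G` contains no
complement-connected graph, i.e. every depth-`(k-1)` cell splits further;
every complement-connected graph (rank `0`) is uniform. -/
def Uniform (G : SimpleGraph V) : Prop :=
  rank G = 0 ∨
    ∀ x : V, ∃ y : V, cellRel G (rank G - 1) x y ∧ ¬ cellRel G (rank G) x y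

/-- A connected graph `G` of rank `k` is inclusion-free if for every
`0 ≤ i ≤ k`: (1) for any `K ∈ Dec^i G`, no two distinct connected components
of the complement of `K` are isomorphic; (2) no member of `Dec^i G` is
properly embeddable into another (embeddable implies isomorphic). -/
def InclusionFree (G : SimpleGraph V) : Prop :=
  ∀ i ≤ rank G,
    (∀ x y : V, cellRel G i x y → ¬ cellRel G (i + 1) x y →
      ¬ Nonempty (envGraph G (i + 1) x ≃g envGraph G (i + 1) y)) ∧
    (∀ x y : V, Nonempty (envGraph G i x ↪g envGraph G i y) →
      Nonempty (envGraph G i x ≃g envGraph G i y))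

/-- A graph is complement-connected if both it and its complement are
connected (in particular its vertex set is nonempty). -/
def CoConnected (G : SimpleGraph V) : Prop := G.Connected ∧ (Gᶜ).Connected

/-- A cocomponent of `G`: an inclusion-maximal complement-connected induced
subgraph of `G`, given by its vertex set `S`. -/
def IsCocomponent (G : SimpleGraph V) (S : Set V) : Prop :=
  CoConnected (G.induce S) ∧
    ∀ T : Set V, S ⊆ T → CoConnected (G.induce T) → T = S

end PaperFO

/-!
Both `G` and `G'` arise from the same quotient graph `Q` on the cocomponents by substituting a
complement-connected graph for every vertex. In such a substitution the cells of every depth are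
unions of fibers, namely the preimages of the cells of `Q`; hence connectivity, rank and
uniformity only depend on `Q`.

For inclusion-freeness, a complement-connected induced subgraph of `G'` lies in a single fiber,
because the fibers of `G` are maximal. So an embedding between two cells of `G'` maps each fiber
into one fiber, and, the graphs `H j l` being pairwise non-embeddable, onto a fiber with the same
index `(j, l)`. It is therefore induced by an index-preserving embedding of the corresponding
cells of `Q`, which can be replayed in `G`, where the fiber over `a` is `H c (l a)`. There
inclusion-freeness of `G` supplies a quotient embedding in the opposite direction, so the quotient
map is a bijection of finite sets and lifts to an isomorphism of the cells of `G'`.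
-/

namespace PaperFO

open Relation SimpleGraph Function Set

section ReflTransGen

variable {W C : Type*} {r : W → W → Prop} {s : C → C → Prop} {π : W → C}

theorem reflTransGen_iff_of_fibers (hπ : Surjective π)
    (hfiber : ∀ x y, π x = π y → ReflTransGen r x y)
    (hcross : ∀ x y, π x ≠ π y → (r x y ↔ s (π x) (π y))) (x y : W) :
    ReflTransGen r x y ↔ ReflTransGen s (π x) (π y) := by
  constructor
  · refine fun h => ReflTransGen.lift' π (fun u v huv => ?_) x y h
    by_cases e : π u = π v
    · simp only [onFun, e, ReflTransGen.refl]
    · exact .single ((hcross u v e).1 huv)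
  · intro h
    suffices ∀ b, ReflTransGen s (π x) b → ∀ y, π y = b → ReflTransGen r x y from
      this _ h y rfl
    intro b hb
    induction hb with
    | refl => exact fun y hy => hfiber x y hy.symm
    | @tail b c _ hbc ih =>
      intro y hy
      obtain ⟨u, rfl⟩ := hπ b
      by_cases e : π u = π y
      · exact (ih u rfl).trans (hfiber u y e)
      · exact (ih u rfl).tail ((hcross u y e).2 (hy ▸ hbc))

end ReflTransGen

section Parity

variable {V : Type} {G : SimpleGraph V} {k : ℕ}

theorem parityAdj_map_iff_iff_adj_map_iff {p q : V → Prop} {f : Subtype p → Subtype q}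
    (hf : Injective f) (u v : Subtype p) :
    (parityAdj G k (f u) (f v) ↔ parityAdj G k u v) ↔ (G.Adj (f u) (f v) ↔ G.Adj u v) := by
  by_cases huv : u = v
  · subst huv
    simp [parityAdj]
  · have hne : (u : V) ≠ v := huv ∘ Subtype.ext
    have hne' : (f u : V) ≠ f v := fun e => huv (hf (Subtype.ext e))
    simp only [parityAdj, ne_eq, hne, hne', not_false_eq_true, true_and]
    tauto

theorem cellRel_refl (G : SimpleGraph V) (k : ℕ) (x : V) : cellRel G k x x := by
  cases k <;> exact .refl

theorem connected_iff_cellRel_zero (G : SimpleGraph V) :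
    G.Connected ↔ Nonempty V ∧ ∀ x y, cellRel G 0 x y := by
  have hadj : (fun a b => parityAdj G 0 a b) = G.Adj := by
    ext a b
    exact ⟨fun h => h.2.2 Even.zero, fun h => ⟨h.ne, iff_of_true h Even.zero⟩⟩
  rw [connected_iff, and_comm, Preconnected]
  simp only [cellRel, hadj, reachable_iff_reflTransGen]

theorem nonempty_envGraph_embedding_iff (G : SimpleGraph V) (k : ℕ) (x y : V) :
    Nonempty (envGraph G k x ↪g envGraph G k y) ↔
      Nonempty (G.induce {u | cellRel G k x u} ↪g G.induce {u | cellRel G k y u}) :=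
  ⟨fun ⟨f⟩ => ⟨⟨f.toEmbedding, fun {u v} =>
      (parityAdj_map_iff_iff_adj_map_iff f.injective u v).1 f.map_rel_iff⟩⟩,
    fun ⟨f⟩ => ⟨⟨f.toEmbedding, fun {u v} =>
      (parityAdj_map_iff_iff_adj_map_iff f.injective u v).2 f.map_rel_iff⟩⟩⟩

theorem nonempty_envGraph_iso_iff (G : SimpleGraph V) (k : ℕ) (x y : V) :
    Nonempty (envGraph G k x ≃g envGraph G k y) ↔
      Nonempty (G.induce {u | cellRel G k x u} ≃g G.induce {u | cellRel G k y u}) :=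
  ⟨fun ⟨f⟩ => ⟨⟨f.toEquiv, fun {u v} =>
      (parityAdj_map_iff_iff_adj_map_iff f.injective u v).1 f.map_rel_iff⟩⟩,
    fun ⟨f⟩ => ⟨⟨f.toEquiv, fun {u v} =>
      (parityAdj_map_iff_iff_adj_map_iff f.injective u v).2 f.map_rel_iff⟩⟩⟩

end Parity

theorem compl_induce {V : Type*} (G : SimpleGraph V) (S : Set V) : (G.induce S)ᶜ = Gᶜ.induce S := by
  ext u v
  simp [Subtype.ext_iff]

section CoConnected

variable {V W : Type} {G : SimpleGraph V} {H : SimpleGraph W}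

theorem CoConnected.compl (h : CoConnected G) : CoConnected Gᶜ :=
  ⟨h.2, by rw [compl_compl]; exact h.1⟩

theorem CoConnected.of_iso (h : CoConnected G) (e : G ≃g H) : CoConnected H :=
  ⟨e.connected_iff.1 h.1, h.2.map (Embedding.complEquiv e.toEmbedding).toHom e.surjective⟩

end CoConnected

structure IsBlowup {V C : Type} (G : SimpleGraph V) (Q : SimpleGraph C) (π : V → C) : Prop where
  coConnected_fiber : ∀ a, CoConnected (G.induce {x | π x = a})
  adj_iff : ∀ x y, π x ≠ π y → (G.Adj x y ↔ Q.Adj (π x) (π y))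

namespace IsBlowup

variable {V C : Type} {G : SimpleGraph V} {Q : SimpleGraph C} {π : V → C}

theorem compl (h : IsBlowup G Q π) : IsBlowup Gᶜ Qᶜ π where
  coConnected_fiber a := by rw [← compl_induce]; exact (h.coConnected_fiber a).compl
  adj_iff x y hxy := by
    rw [compl_adj, compl_adj, h.adj_iff x y hxy]
    exact and_congr_left' (iff_of_true (fun e => hxy (congrArg π e)) hxy)

theorem surjective (h : IsBlowup G Q π) : Surjective π := fun a =>
  let ⟨⟨x, hx⟩⟩ := (h.coConnected_fiber a).1.nonempty
  ⟨x, hx⟩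

theorem reflTransGen_fiber (h : IsBlowup G Q π) (a : C) (u v : {x | π x = a}) :
    ReflTransGen (G.induce {x | π x = a}).Adj u v :=
  (reachable_iff_reflTransGen u v).1 ((h.coConnected_fiber a).1.preconnected u v)

theorem reflTransGen_parityAdj (h : IsBlowup G Q π) (m : ℕ) {x y : V} (hxy : π x = π y) :
    ReflTransGen (fun u v => π u = π v ∧ parityAdj G m u v) x y := by
  rcases Nat.even_or_odd m with hm | hm
  · exact (h.reflTransGen_fiber _ ⟨x, hxy⟩ ⟨y, rfl⟩).lift Subtype.val
      fun u v huv => ⟨u.2.trans v.2.symm, huv.ne ∘ Subtype.ext, iff_of_true huv hm⟩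
  · exact (h.compl.reflTransGen_fiber _ ⟨x, hxy⟩ ⟨y, rfl⟩).lift Subtype.val
      fun u v huv => ⟨u.2.trans v.2.symm, huv.1, iff_of_false huv.2 (Nat.not_even_iff_odd.2 hm)⟩

theorem parityAdj_iff (h : IsBlowup G Q π) (m : ℕ) {x y : V} (hxy : π x ≠ π y) :
    parityAdj G m x y ↔ parityAdj Q m (π x) (π y) := by
  simp only [parityAdj, h.adj_iff x y hxy, ne_eq, hxy, not_false_eq_true, true_and]
  exact and_iff_right fun e => hxy (e ▸ rfl)

theorem cellRel_iff (h : IsBlowup G Q π) (k : ℕ) (x y : V) :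
    cellRel G k x y ↔ cellRel Q k (π x) (π y) := by
  induction k generalizing x y with
  | zero =>
    exact reflTransGen_iff_of_fibers h.surjective
      (fun x y hxy => ReflTransGen.mono (fun _ _ => And.right) _ _ (h.reflTransGen_parityAdj 0 hxy))
      (fun x y hxy => h.parityAdj_iff 0 hxy) x y
  | succ k ih =>
    exact reflTransGen_iff_of_fibers h.surjective
      (fun x y hxy => ReflTransGen.mono
        (fun u v huv => ⟨(ih u v).2 (huv.1 ▸ cellRel_refl Q k _), huv.2⟩)
        _ _ (h.reflTransGen_parityAdj (k + 1) hxy))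
      (fun x y hxy => and_congr (ih x y) (h.parityAdj_iff (k + 1) hxy)) x y

theorem cell_eq (h : IsBlowup G Q π) (k : ℕ) (x : V) :
    {u | cellRel G k x u} = π ⁻¹' {a | cellRel Q k (π x) a} :=
  Set.ext fun u => h.cellRel_iff k x u

theorem rank_eq (h : IsBlowup G Q π) : rank G = rank Q := by
  simp only [rank, h.cellRel_iff]
  congr! 3 with k
  exact (h.surjective.forall₂ (p := fun a b => cellRel Q (k + 1) a b ↔ cellRel Q k a b)).symm

theorem connected_iff (h : IsBlowup G Q π) : G.Connected ↔ Q.Connected := by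
  simp only [connected_iff_cellRel_zero, h.cellRel_iff, ← h.surjective.forall₂ (p := cellRel Q 0)]
  exact and_congr_left' ⟨fun ⟨x⟩ => ⟨π x⟩, fun ⟨a⟩ => ⟨(h.surjective a).choose⟩⟩

theorem uniform_iff (h : IsBlowup G Q π) : Uniform G ↔ Uniform Q := by
  simp only [Uniform, h.rank_eq, h.cellRel_iff]
  rw [h.surjective.forall]
  simp only [h.surjective.exists]

theorem connected_induce_image (h : IsBlowup G Q π) {S : Set V} (hS : (G.induce S).Connected) :
    (Q.induce (π '' S)).Connected := by
  have : Nonempty S := hS.nonempty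
  refine (SimpleGraph.connected_iff _).2 ⟨?_, this.map fun s : S => ⟨π s, s, s.2, rfl⟩⟩
  rintro ⟨_, s, hs, rfl⟩ ⟨_, t, ht, rfl⟩
  rw [reachable_iff_reflTransGen]
  refine ReflTransGen.lift' (fun u : S => (⟨π u, u, u.2, rfl⟩ : π '' S)) (fun u v huv => ?_) _ _
    ((reachable_iff_reflTransGen _ _).1 (hS.preconnected ⟨s, hs⟩ ⟨t, ht⟩))
  by_cases e : π u = π v
  · simp only [onFun, e, ReflTransGen.refl]
  · exact .single ((h.adj_iff u v e).1 huv)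

theorem connected_induce_preimage (h : IsBlowup G Q π) {D : Set C} (hD : (Q.induce D).Connected) :
    (G.induce (π ⁻¹' D)).Connected := by
  have hsurj : Surjective (D.restrictPreimage π) := fun a =>
    let ⟨x, hx⟩ := h.surjective a
    ⟨⟨x, by simp [hx]⟩, Subtype.ext hx⟩
  have hfiber (u v : π ⁻¹' D) (huv : π u = π v) : (G.induce (π ⁻¹' D)).Reachable u v :=
    (h.coConnected_fiber (π v)).1.preconnected ⟨u, huv⟩ ⟨v, rfl⟩ |>.map
      (G.induceHomOfLE fun x (hx : π x = π v) => show π x ∈ D from hx ▸ v.2).toHom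
  refine (SimpleGraph.connected_iff _).2 ⟨fun u v => ?_, hD.nonempty.map fun a => (hsurj a).choose⟩
  rw [reachable_iff_reflTransGen, reflTransGen_iff_of_fibers (s := (Q.induce D).Adj) hsurj
    (fun u v huv => (reachable_iff_reflTransGen u v).1 (hfiber u v (congrArg Subtype.val huv)))
    (fun u v huv => h.adj_iff u v fun e => huv (Subtype.ext e))]
  exact (reachable_iff_reflTransGen _ _).1 (hD.preconnected _ _)

theorem subsingleton_of_coConnected (h : IsBlowup G Q π)
    (hcocomp : ∀ a, IsCocomponent G {x | π x = a}) {D : Set C} (hD : CoConnected (Q.induce D)) :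
    D.Subsingleton := by
  have hpre : CoConnected (G.induce (π ⁻¹' D)) := by
    refine ⟨h.connected_induce_preimage hD.1, ?_⟩
    rw [compl_induce]
    exact h.compl.connected_induce_preimage (by rw [← compl_induce]; exact hD.2)
  intro a ha b hb
  obtain ⟨x, rfl⟩ := h.surjective b
  have hfiber := (hcocomp a).2 (π ⁻¹' D) (fun x (hx : π x = a) => show π x ∈ D from hx ▸ ha) hpre
  have hx : x ∈ π ⁻¹' D := hb
  rw [hfiber] at hx
  exact hx.symm

theorem image_subsingleton (h : IsBlowup G Q π)
    (hQ : ∀ D : Set C, CoConnected (Q.induce D) → D.Subsingleton) {S : Set V}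
    (hS : CoConnected (G.induce S)) : (π '' S).Subsingleton := by
  refine hQ _ ⟨h.connected_induce_image hS.1, ?_⟩
  rw [compl_induce]
  exact h.compl.connected_induce_image (by rw [← compl_induce]; exact hS.2)

end IsBlowup

theorem image_eq_of_injOn_of_injOn {α β : Type*} [Finite α] [Finite β] {f : α → β} {g : β → α}
    {A : Set α} {B : Set β} (hf : MapsTo f A B) (hf' : InjOn f A) (hg : MapsTo g B A)
    (hg' : InjOn g B) : f '' A = B :=
  Set.eq_of_subset_of_ncard_le hf.image_subset
    (by rw [hf'.ncard_image]; exact ncard_le_ncard_of_injOn g hg hg')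

theorem exists_fiberwise_glue {V C : Type*} {π : V → C} {A : Set C}
    (e : ∀ a ∈ A, {x // π x = a} → V) :
    ∃ Φ : V → V, ∀ a (ha : a ∈ A) (z : {x // π x = a}), Φ z = e a ha z := by
  classical
  refine ⟨fun u => if hu : π u ∈ A then e (π u) hu ⟨u, rfl⟩ else u, ?_⟩
  rintro a ha ⟨z, rfl⟩
  simp [ha]

section Labels

variable {V C T : Type} {G : SimpleGraph V} {Q : SimpleGraph C} {π : V → C} {τ : C → T}

structure IsFiberLabelling (G : SimpleGraph V) (π : V → C) (τ : C → T) : Prop where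
  eq_of_embedding : ∀ a b,
    Nonempty (G.induce {x | π x = a} ↪g G.induce {x | π x = b}) → τ a = τ b
  iso_of_eq : ∀ a b, τ a = τ b → Nonempty (G.induce {x | π x = a} ≃g G.induce {x | π x = b})

theorem isFiberLabelling_of_iso {X : T → Type} (K : ∀ t, SimpleGraph (X t)) (τ : C → T)
    (hiso : ∀ a, Nonempty (G.induce {x | π x = a} ≃g K (τ a)))
    (hK : ∀ a b, τ a ≠ τ b → ¬ Nonempty (K (τ a) ↪g K (τ b))) : IsFiberLabelling G π τ where
  eq_of_embedding a b := fun ⟨f⟩ => by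
    by_contra hab
    exact hK a b hab
      ⟨((hiso b).some.toEmbedding.comp f).comp (hiso a).some.symm.toEmbedding⟩
  iso_of_eq a b hab := by
    obtain ⟨ea⟩ := hiso a
    obtain ⟨eb⟩ := hiso b
    rw [hab] at ea
    exact ⟨ea.trans eb.symm⟩

structure IsLabelledEmbeddingOn (Q : SimpleGraph C) (τ : C → T) (g : C → C) (A B : Set C) :
    Prop where
  mapsTo : MapsTo g A B
  injOn : InjOn g A
  adj_iff : ∀ a ∈ A, ∀ b ∈ A, Q.Adj (g a) (g b) ↔ Q.Adj a b
  label_eq : ∀ a ∈ A, τ (g a) = τ a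

theorem IsLabelledEmbeddingOn.comp_label {T' : Type} {g : C → C} {A B : Set C}
    (h : IsLabelledEmbeddingOn Q τ g A B) (σ : T → T') : IsLabelledEmbeddingOn Q (σ ∘ τ) g A B :=
  ⟨h.mapsTo, h.injOn, h.adj_iff, fun a ha => congrArg σ (h.label_eq a ha)⟩

end Labels

namespace IsBlowup

variable {V C T : Type} {G : SimpleGraph V} {Q : SimpleGraph C} {π : V → C} {τ : C → T}
  {g : C → C} {A B : Set C}

theorem nonempty_iso_image (h : IsBlowup G Q π) (hτ : IsFiberLabelling G π τ)
    (hg : IsLabelledEmbeddingOn Q τ g A B) :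
    Nonempty (G.induce (π ⁻¹' A) ≃g G.induce (π ⁻¹' (g '' A))) := by
  have he a (ha : a ∈ A) := (hτ.iso_of_eq a (g a) (hg.label_eq a ha).symm).some
  obtain ⟨Φ, hΦ⟩ := exists_fiberwise_glue fun a ha z => (he a ha z).1
  have hπΦ u (hu : π u ∈ A) : π (Φ u) = g (π u) := by
    rw [hΦ _ hu ⟨u, rfl⟩]
    exact (he _ hu _).2
  have hfiber u v (hu : π u ∈ A) (huv : π u = π v) :
      (Φ u = Φ v ↔ u = v) ∧ (G.Adj (Φ u) (Φ v) ↔ G.Adj u v) := by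
    rw [hΦ _ hu ⟨u, rfl⟩, hΦ _ hu ⟨v, huv.symm⟩, Subtype.val_inj, (he _ hu).injective.eq_iff]
    exact ⟨Subtype.mk_eq_mk, (he _ hu).map_adj_iff⟩
  have himage : BijOn Φ (π ⁻¹' A) (π ⁻¹' (g '' A)) := by
    refine ⟨fun u hu => ⟨π u, hu, (hπΦ u hu).symm⟩, fun u hu v hv huv => ?_, ?_⟩
    · have hπ : π u = π v := hg.injOn hu hv (by rw [← hπΦ u hu, ← hπΦ v hv, huv])
      exact (hfiber u v hu hπ).1.1 huv
    · rintro w ⟨a, ha, hw⟩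
      refine ⟨(he a ha).symm ⟨w, hw.symm⟩, ?_, ?_⟩
      · rw [mem_preimage, ((he a ha).symm _).2]
        exact ha
      · rw [hΦ a ha, RelIso.apply_symm_apply]
  refine ⟨⟨himage.equiv Φ, fun {u v} => ?_⟩⟩
  change G.Adj (Φ u) (Φ v) ↔ G.Adj u v
  by_cases huv : π u = π v
  · exact (hfiber u v u.2 huv).2
  · have hne : g (π u) ≠ g (π v) := fun e => huv (hg.injOn u.2 v.2 e)
    rw [h.adj_iff _ _ huv, h.adj_iff _ _ (by rwa [hπΦ u u.2, hπΦ v v.2]), hπΦ u u.2, hπΦ v v.2]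
    exact hg.adj_iff _ u.2 _ v.2

theorem nonempty_embedding (h : IsBlowup G Q π) (hτ : IsFiberLabelling G π τ)
    (hg : IsLabelledEmbeddingOn Q τ g A B) :
    Nonempty (G.induce (π ⁻¹' A) ↪g G.induce (π ⁻¹' B)) :=
  let ⟨e⟩ := h.nonempty_iso_image hτ hg
  ⟨(G.induceHomOfLE (preimage_mono hg.mapsTo.image_subset)).comp e.toEmbedding⟩

/-- The image of a fiber is complement-connected, hence lies in a single fiber; that fiber carries
the same label, so it has the same size and the image fills it. -/
theorem exists_range_eq_fiber [Finite V] (h : IsBlowup G Q π)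
    (hQ : ∀ D : Set C, CoConnected (Q.induce D) → D.Subsingleton) (hτ : IsFiberLabelling G π τ)
    {a : C} (F : G.induce {x | π x = a} ↪g G) : ∃ b, τ b = τ a ∧ range F = {x | π x = b} := by
  have hco : CoConnected (G.induce (range F)) :=
    (h.coConnected_fiber a).of_iso F.isoInduceRange
  obtain ⟨z₀⟩ := (h.coConnected_fiber a).1.nonempty
  have hsub : range F ⊆ {x | π x = π (F z₀)} := by
    rintro _ ⟨z, rfl⟩
    exact h.image_subsingleton hQ hco (mem_image_of_mem π (mem_range_self z))
      (mem_image_of_mem π (mem_range_self z₀))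
  have hab := hτ.eq_of_embedding _ _
    ⟨(G.induceHomOfLE hsub).comp F.isoInduceRange.toEmbedding⟩
  obtain ⟨e⟩ := hτ.iso_of_eq _ _ hab
  refine ⟨π (F z₀), hab.symm, Set.eq_of_subset_of_ncard_le hsub ?_⟩
  rw [← Nat.card_coe_set_eq, ← Nat.card_coe_set_eq, ← Nat.card_congr e.toEquiv,
    Nat.card_congr F.isoInduceRange.toEquiv]

theorem exists_isLabelledEmbeddingOn [Finite V] (h : IsBlowup G Q π)
    (hQ : ∀ D : Set C, CoConnected (Q.induce D) → D.Subsingleton) (hτ : IsFiberLabelling G π τ)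
    (f : G.induce (π ⁻¹' A) ↪g G.induce (π ⁻¹' B)) : ∃ g, IsLabelledEmbeddingOn Q τ g A B := by
  have hF a (ha : a ∈ A) := h.exists_range_eq_fiber hQ hτ ((Embedding.induce _).comp
    (f.comp (G.induceHomOfLE fun x (hx : π x = a) => show π x ∈ A from hx ▸ ha)))
  choose! g hgτ hgrange using hF
  have hfg (u : π ⁻¹' A) : π (f u) = g (π u) := by
    show (f u : V) ∈ {x | π x = g (π u)}
    rw [← hgrange _ u.2]
    exact ⟨⟨u, rfl⟩, rfl⟩
  have hfiber a (ha : a ∈ A) w (hw : π w = g a) : ∃ u : π ⁻¹' A, π u = a ∧ (f u : V) = w := by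
    replace hw : w ∈ {x | π x = g a} := hw
    rw [← hgrange a ha] at hw
    obtain ⟨z, hz⟩ := hw
    refine ⟨_, ?_, hz⟩
    exact z.2
  have hrep a (ha : a ∈ A) : ∃ u : π ⁻¹' A, π u = a :=
    let ⟨x, hx⟩ := h.surjective a
    ⟨⟨x, show π x ∈ A from hx ▸ ha⟩, hx⟩
  have hinj : InjOn g A := by
    intro a ha b hb hab
    obtain ⟨w, hw⟩ := h.surjective (g a)
    obtain ⟨u, rfl, hu⟩ := hfiber a ha w hw
    obtain ⟨v, rfl, hv⟩ := hfiber b hb w (hw.trans hab)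
    rw [f.injective (Subtype.ext (hu.trans hv.symm))]
  refine ⟨g, fun a ha => ?_, hinj, fun a ha b hb => ?_, hgτ⟩
  · obtain ⟨u, rfl⟩ := hrep a ha
    exact hfg u ▸ (f u).2
  · obtain ⟨u, rfl⟩ := hrep a ha
    obtain ⟨v, rfl⟩ := hrep b hb
    by_cases huv : π u = π v
    · simp [huv]
    · have hne : π (f u) ≠ π (f v) := by
        rw [hfg, hfg]
        exact fun e => huv (hinj ha hb e)
      rw [← hfg, ← hfg, ← h.adj_iff _ _ hne, ← h.adj_iff _ _ huv]
      exact f.map_adj_iff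

end IsBlowup

section InclusionFree

variable {V V' C T T' : Type} [Finite V] [Finite V'] {G : SimpleGraph V} {G' : SimpleGraph V'}
  {Q : SimpleGraph C} {π : V → C} {π' : V' → C} {τ : C → T}

theorem nonempty_envGraph_iso_of_embedding (hG : IsBlowup G Q π) (hG' : IsBlowup G' Q π')
    (hQ : ∀ D : Set C, CoConnected (Q.induce D) → D.Subsingleton) (σ : T → T')
    (hτ : IsFiberLabelling G π (σ ∘ τ)) (hτ' : IsFiberLabelling G' π' τ) {k : ℕ}
    (hincl : ∀ x y : V, Nonempty (envGraph G k x ↪g envGraph G k y) →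
      Nonempty (envGraph G k x ≃g envGraph G k y))
    {x' y' : V'} (f : Nonempty (envGraph G' k x' ↪g envGraph G' k y')) :
    Nonempty (envGraph G' k x' ≃g envGraph G' k y') := by
  have : Finite C := Finite.of_surjective π hG.surjective
  obtain ⟨x, hx⟩ := hG.surjective (π' x')
  obtain ⟨y, hy⟩ := hG.surjective (π' y')
  rw [nonempty_envGraph_embedding_iff, hG'.cell_eq, hG'.cell_eq] at f
  obtain ⟨g, hg⟩ := hG'.exists_isLabelledEmbeddingOn hQ hτ' f.some
  have hiso := hincl x y (by
    rw [nonempty_envGraph_embedding_iff, hG.cell_eq, hG.cell_eq, hx, hy]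
    exact hG.nonempty_embedding hτ (hg.comp_label σ))
  rw [nonempty_envGraph_iso_iff, hG.cell_eq, hG.cell_eq, hx, hy] at hiso
  obtain ⟨g₂, hg₂⟩ := hG.exists_isLabelledEmbeddingOn hQ hτ hiso.some.symm.toEmbedding
  have himage := image_eq_of_injOn_of_injOn hg.mapsTo hg.injOn hg₂.mapsTo hg₂.injOn
  rw [nonempty_envGraph_iso_iff, hG'.cell_eq, hG'.cell_eq, ← himage]
  exact hG'.nonempty_iso_image hτ' hg

theorem not_nonempty_envGraph_iso (hG : IsBlowup G Q π) (hG' : IsBlowup G' Q π')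
    (hQ : ∀ D : Set C, CoConnected (Q.induce D) → D.Subsingleton) (σ : T → T')
    (hτ : IsFiberLabelling G π (σ ∘ τ)) (hτ' : IsFiberLabelling G' π' τ) {k : ℕ}
    (hincl : ∀ x y : V, cellRel G k x y → ¬ cellRel G (k + 1) x y →
      ¬ Nonempty (envGraph G (k + 1) x ≃g envGraph G (k + 1) y))
    {x' y' : V'} (h₁ : cellRel G' k x' y') (h₂ : ¬ cellRel G' (k + 1) x' y') :
    ¬ Nonempty (envGraph G' (k + 1) x' ≃g envGraph G' (k + 1) y') := by
  have : Finite C := Finite.of_surjective π hG.surjective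
  obtain ⟨x, hx⟩ := hG.surjective (π' x')
  obtain ⟨y, hy⟩ := hG.surjective (π' y')
  rw [nonempty_envGraph_iso_iff, hG'.cell_eq, hG'.cell_eq]
  rintro ⟨F⟩
  obtain ⟨g, hg⟩ := hG'.exists_isLabelledEmbeddingOn hQ hτ' F.toEmbedding
  obtain ⟨g₂, hg₂⟩ := hG'.exists_isLabelledEmbeddingOn hQ hτ' F.symm.toEmbedding
  have himage := image_eq_of_injOn_of_injOn hg.mapsTo hg.injOn hg₂.mapsTo hg₂.injOn
  refine hincl x y ?_ ?_ ?_
  · rwa [hG.cellRel_iff, hx, hy, ← hG'.cellRel_iff]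
  · rwa [hG.cellRel_iff, hx, hy, ← hG'.cellRel_iff]
  · rw [nonempty_envGraph_iso_iff, hG.cell_eq, hG.cell_eq, hx, hy, ← himage]
    exact hG.nonempty_iso_image hτ (hg.comp_label σ)

theorem inclusionFree_of_isBlowup (hG : IsBlowup G Q π) (hG' : IsBlowup G' Q π')
    (hQ : ∀ D : Set C, CoConnected (Q.induce D) → D.Subsingleton) (σ : T → T')
    (hτ : IsFiberLabelling G π (σ ∘ τ)) (hτ' : IsFiberLabelling G' π' τ)
    (hincl : InclusionFree G) : InclusionFree G' := by
  intro k hk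
  rw [hG'.rank_eq, ← hG.rank_eq] at hk
  exact ⟨fun _ _ => not_nonempty_envGraph_iso hG hG' hQ σ hτ hτ' (hincl k hk).1,
    fun _ _ => nonempty_envGraph_iso_of_embedding hG hG' hQ σ hτ hτ' (hincl k hk).2⟩

end InclusionFree

theorem statement_18_general {V V' : Type} [Fintype V] [Fintype V'] (c i : ℕ)
    (H : (j : ℕ) → Fin 4 → SimpleGraph (Fin j))
    (hcc : ∀ j ∈ Set.Icc c (2 * c), ∀ l : Fin 4, CoConnected (H j l))
    (hemb : ∀ j ∈ Set.Icc c (2 * c), ∀ j' ∈ Set.Icc c (2 * c), ∀ l l' : Fin 4,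
      (j, l) ≠ (j', l') → ¬ Nonempty (H j l ↪g H j' l'))
    (G : SimpleGraph V) (G' : SimpleGraph V')
    (hGconn : G.Connected) (hGunif : Uniform G) (hGincl : InclusionFree G)
    (hGrk : rank G = i)
    (C : Type) (Q : SimpleGraph C) (π : V → C) (π' : V' → C)
    (l : C → Fin 4) (j : C → ℕ) (hj : ∀ a : C, j a ∈ Set.Icc c (2 * c))
    (hfib : ∀ a : C, IsCocomponent G {x : V | π x = a})
    (hcoG : ∀ a : C, Nonempty (G.induce {x : V | π x = a} ≃g H c (l a)))
    (hcross : ∀ x y : V, π x ≠ π y → (G.Adj x y ↔ Q.Adj (π x) (π y)))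
    (hcoG' : ∀ a : C, Nonempty (G'.induce {x : V' | π' x = a} ≃g H (j a) (l a)))
    (hcross' : ∀ x y : V', π' x ≠ π' y → (G'.Adj x y ↔ Q.Adj (π' x) (π' y))) :
    G'.Connected ∧ Uniform G' ∧ InclusionFree G' ∧ rank G' = i := by
  have hG : IsBlowup G Q π := ⟨fun a => (hfib a).1, hcross⟩
  have hG' : IsBlowup G' Q π' := ⟨fun a => (hcc _ (hj a) _).of_iso (hcoG' a).some.symm, hcross'⟩
  have hc : c ∈ Set.Icc c (2 * c) := ⟨le_rfl, by omega⟩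
  have hτ : IsFiberLabelling G π (Prod.snd ∘ fun a => (j a, l a)) :=
    isFiberLabelling_of_iso (H c) _ hcoG fun a b hab => hemb c hc c hc _ _ (by simpa using hab)
  have hτ' : IsFiberLabelling G' π' fun a => (j a, l a) :=
    isFiberLabelling_of_iso (fun t : ℕ × Fin 4 => H t.1 t.2) _ hcoG'
      fun a b hab => hemb _ (hj a) _ (hj b) _ _ hab
  refine ⟨hG'.connected_iff.2 (hG.connected_iff.1 hGconn),
    hG'.uniform_iff.2 (hG.uniform_iff.1 hGunif), ?_, hG'.rank_eq.trans (hG.rank_eq.symm.trans hGrk)⟩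
  exact inclusionFree_of_isBlowup hG hG' (fun _ => hG.subsingleton_of_coConnected hfib) Prod.snd
    hτ hτ' hGincl

theorem statement_18 {V V' : Type} [Fintype V] [Fintype V'] (c i : ℕ) (hc : 1 ≤ c)
    (H : (j : ℕ) → Fin 4 → SimpleGraph (Fin j))
    (hcc : ∀ j ∈ Set.Icc c (2 * c), ∀ l : Fin 4, CoConnected (H j l))
    (hemb : ∀ j ∈ Set.Icc c (2 * c), ∀ j' ∈ Set.Icc c (2 * c), ∀ l l' : Fin 4,
      (j, l) ≠ (j', l') → ¬ Nonempty (H j l ↪g H j' l'))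
    (G : SimpleGraph V) (G' : SimpleGraph V')
    (hGconn : G.Connected) (hGunif : Uniform G) (hGincl : InclusionFree G)
    (hGrk : rank G = i)
    (C : Type) (Q : SimpleGraph C) (π : V → C) (π' : V' → C)
    (l : C → Fin 4) (j : C → ℕ) (hj : ∀ a : C, j a ∈ Set.Icc c (2 * c))
    (hfib : ∀ a : C, IsCocomponent G {x : V | π x = a})
    (hcoG : ∀ a : C, Nonempty (G.induce {x : V | π x = a} ≃g H c (l a)))
    (hcross : ∀ x y : V, π x ≠ π y → (G.Adj x y ↔ Q.Adj (π x) (π y)))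
    (hcoG' : ∀ a : C, Nonempty (G'.induce {x : V' | π' x = a} ≃g H (j a) (l a)))
    (hcross' : ∀ x y : V', π' x ≠ π' y → (G'.Adj x y ↔ Q.Adj (π' x) (π' y))) :
    G'.Connected ∧ Uniform G' ∧ InclusionFree G' ∧ rank G' = i :=
  statement_18_general c i H hcc hemb G G' hGconn hGunif hGincl hGrk C Q π π' l j hj hfib hcoG
    hcross hcoG' hcross'

end PaperFO
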